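/- Let (f_k)_{k=0}^{n-1} be independent nonnegative random variables on (0,1) with disjoint sum f = ⊕_{k=0}^{n-1} f_k, assume μ(f) has no intervals of constancy, and set g_k = f_k · 1_{{f_k > μ(1,f)}}, g = ⊕ g_k. Then μ(max_{0≤k<n} g_k)(t) ≥ μ(g)(2t) for all t, and consequently μ(g) = μ(f)·χ_{(0,1)}. -/

import Mathlib

open MeasureTheory ProbabilityTheory Filter Topology Set
open scoped ENNReal

/-!
Write `D_f(λ) = ∑ k, |{f_k > λ}|` and `m = μ(1,f)`. Right-continuity of `D_f` gives `D_f(m) ≤ 1`,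
and for `λ ≥ 0` the truncation gives `D_g(λ) = D_f(max λ m) ≤ 1`. Hence `μ(g)` vanishes on `[1,∞)`,
and on `(0,1)` the strict decrease of `μ(f)` rules out every level below `m`, so `μ(g) = μ(f)`
there. For the maximum, independence gives `|{max_k g_k > λ}| = 1 - ∏ k, (1 - a_k)` with
`a_k = |{g_k > λ}|`, and `∏ k, (1 - a_k) ≤ 1 - (∑ k, a_k) / 2` once `∑ k, a_k ≤ 1`. Thus
`D_g(λ) ≤ 2 |{max_k g_k > λ}|`, which compares `μ(g)` at `2t` with `μ(max_k g_k)` at `t`.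
-/

/-- Lebesgue measure on `(0,1)`. -/
noncomputable def P : Measure ℝ := volume.restrict (Set.Ioo 0 1)

/-- Decreasing rearrangement associated to a distribution function `D`:
`s ↦ inf {λ ≥ 0 : D(λ) ≤ s}`. -/
noncomputable def rearr (D : ℝ → ℝ≥0∞) (s : ℝ) : ℝ :=
  sInf {l : ℝ | 0 ≤ l ∧ D l ≤ ENNReal.ofReal s}

instance : IsProbabilityMeasure P := ⟨by simp [P, Real.volume_Ioo]⟩

lemma prod_one_sub_le_one_sub_sum_div_two {ι : Type*} (s : Finset ι) {a : ι → ℝ}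
    (h0 : ∀ i ∈ s, 0 ≤ a i) (hsum : ∑ i ∈ s, a i ≤ 1) :
    ∏ i ∈ s, (1 - a i) ≤ 1 - (∑ i ∈ s, a i) / 2 := by
  induction s using Finset.cons_induction with
  | empty => simp
  | cons j s _ ih =>
    rw [Finset.prod_cons, Finset.sum_cons] at *
    have hS0 : 0 ≤ ∑ i ∈ s, a i := Finset.sum_nonneg fun i hi => h0 i (Finset.mem_cons_of_mem hi)
    have hj0 : 0 ≤ a j := h0 j (Finset.mem_cons_self j s)
    have hih := ih (fun i hi => h0 i (Finset.mem_cons_of_mem hi)) (by linarith)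
    nlinarith [mul_le_mul_of_nonneg_left hih (by linarith : (0:ℝ) ≤ 1 - a j),
      mul_nonneg hj0 (by linarith : (0:ℝ) ≤ 1 - ∑ i ∈ s, a i)]

lemma ENNReal.sum_le_two_mul_one_sub_prod_one_sub {ι : Type*} (s : Finset ι) {a : ι → ℝ≥0∞}
    (hsum : ∑ i ∈ s, a i ≤ 1) : ∑ i ∈ s, a i ≤ 2 * (1 - ∏ i ∈ s, (1 - a i)) := by
  have ha1 : ∀ i ∈ s, a i ≤ 1 := fun i hi =>
    (Finset.single_le_sum (fun _ _ => bot_le) hi).trans hsum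
  have hfin : ∀ i ∈ s, a i ≠ ∞ := fun i hi => ne_top_of_le_ne_top one_ne_top (ha1 i hi)
  have hprod : ∏ i ∈ s, (1 - a i) ≤ 1 := Finset.prod_le_one' fun _ _ => tsub_le_self
  rw [← ENNReal.toReal_le_toReal (ne_top_of_le_ne_top one_ne_top hsum) (by finiteness),
    ENNReal.toReal_sum hfin, ENNReal.toReal_mul, ENNReal.toReal_sub_of_le hprod one_ne_top,
    ENNReal.toReal_prod,
    Finset.prod_congr rfl fun i hi => ENNReal.toReal_sub_of_le (ha1 i hi) one_ne_top]
  have hsum' : ∑ i ∈ s, (a i).toReal ≤ 1 := by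
    rw [← ENNReal.toReal_sum hfin]
    exact ENNReal.toReal_le_of_le_ofReal zero_le_one (by simpa using hsum)
  have hreal := prod_one_sub_le_one_sub_sum_div_two s (fun i _ => ENNReal.toReal_nonneg) hsum'
  simp only [ENNReal.toReal_one, ENNReal.toReal_ofNat]
  linarith

namespace ProbabilityTheory

variable {Ω ι : Type*} [MeasurableSpace Ω] [Fintype ι] {μ : Measure Ω} [IsProbabilityMeasure μ]
  {β : ι → Type*} [∀ i, MeasurableSpace (β i)] {h : ∀ i, Ω → β i} {S : ∀ i, Set (β i)}

lemma iIndepFun.measure_iUnion_preimage (hind : iIndepFun h μ) (hh : ∀ i, Measurable (h i))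
    (hS : ∀ i, MeasurableSet (S i)) :
    μ (⋃ i, h i ⁻¹' S i) = 1 - ∏ i, (1 - μ (h i ⁻¹' S i)) := by
  have hm : ∀ i, MeasurableSet (h i ⁻¹' S i) := fun i => hh i (hS i)
  have hcompl : ∏ i, (1 - μ (h i ⁻¹' S i)) = 1 - μ (⋃ i, h i ⁻¹' S i) := by
    simp_rw [← prob_compl_eq_one_sub (hm _), ← prob_compl_eq_one_sub (MeasurableSet.iUnion hm),
      compl_iUnion]
    exact (hind.meas_iInter fun i => ⟨(S i)ᶜ, (hS i).compl, rfl⟩).symm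
  rw [hcompl, ENNReal.sub_sub_cancel ENNReal.one_ne_top prob_le_one]

lemma iIndepFun.sum_measure_preimage_le_two_mul (hind : iIndepFun h μ)
    (hh : ∀ i, Measurable (h i)) (hS : ∀ i, MeasurableSet (S i))
    (hsum : ∑ i, μ (h i ⁻¹' S i) ≤ 1) :
    ∑ i, μ (h i ⁻¹' S i) ≤ 2 * μ (⋃ i, h i ⁻¹' S i) := by
  rw [hind.measure_iUnion_preimage hh hS]
  exact ENNReal.sum_le_two_mul_one_sub_prod_one_sub _ hsum

end ProbabilityTheory

section Rearrangement

variable {D D' : ℝ → ℝ≥0∞} {l s s' : ℝ}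

lemma rearr_nonneg (D : ℝ → ℝ≥0∞) (s : ℝ) : 0 ≤ rearr D s :=
  Real.sInf_nonneg fun _ hl => hl.1

lemma rearr_le (hl : 0 ≤ l) (hD : D l ≤ ENNReal.ofReal s) : rearr D s ≤ l :=
  csInf_le ⟨0, fun _ hx => hx.1⟩ ⟨hl, hD⟩

lemma rearr_eq_zero (hD : D 0 ≤ ENNReal.ofReal s) : rearr D s = 0 :=
  (rearr_le le_rfl hD).antisymm (rearr_nonneg D s)

lemma rearr_le_rearr (hne : ∃ l, 0 ≤ l ∧ D' l ≤ ENNReal.ofReal s')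
    (h : ∀ l, 0 ≤ l → D' l ≤ ENNReal.ofReal s' → D l ≤ ENNReal.ofReal s) :
    rearr D s ≤ rearr D' s' :=
  csInf_le_csInf ⟨0, fun _ hx => hx.1⟩ hne fun l hl => ⟨hl.1, h l hl.1 hl.2⟩

lemma rearr_congr (h : ∀ l, 0 ≤ l → (D l ≤ ENNReal.ofReal s ↔ D' l ≤ ENNReal.ofReal s)) :
    rearr D s = rearr D' s :=
  congrArg sInf (Set.ext fun l => and_congr_right (h l))

lemma apply_rearr_le (hanti : Antitone D) (hright : ∀ a, ContinuousWithinAt D (Ioi a) a)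
    (hne : ∃ l, 0 ≤ l ∧ D l ≤ ENNReal.ofReal s) : D (rearr D s) ≤ ENNReal.ofReal s := by
  refine le_of_tendsto (hright _) (eventually_nhdsWithin_of_forall fun l hl => ?_)
  obtain ⟨x, hx, hxl⟩ := exists_lt_of_csInf_lt hne hl
  exact (hanti hxl.le).trans hx.2

end Rearrangement

section Distribution

variable {Ω ι : Type*} [MeasurableSpace Ω] {μ : Measure Ω}

lemma tendsto_measure_setOf_lt_nhdsGT (μ : Measure Ω) (h : Ω → ℝ) (a : ℝ) :
    Tendsto (fun l => μ {x | l < h x}) (𝓝[>] a) (𝓝 (μ {x | a < h x})) := by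
  have : (atBot : Filter (Ioi a)).IsCountablyGenerated := by
    rw [← comap_coe_Ioi_nhdsGT a]; infer_instance
  have hU : ⋃ l : Ioi a, {x | (l : ℝ) < h x} = {x | a < h x} := by
    ext x
    simp only [mem_iUnion, mem_ofPred_eq]
    refine ⟨fun ⟨l, hx⟩ => l.2.out.trans hx, fun hx => ?_⟩
    obtain ⟨l, hal, hlx⟩ := exists_between hx
    exact ⟨⟨l, hal⟩, hlx⟩
  rw [← map_coe_Ioi_atBot a, tendsto_map'_iff, ← hU]
  exact tendsto_measure_iUnion_atBot fun l l' hll' x (hx : (l' : ℝ) < h x) =>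
    show (l : ℝ) < h x from (Subtype.coe_le_coe.2 hll').trans_lt hx

lemma tendsto_measure_setOf_lt_atTop (μ : Measure Ω) [IsFiniteMeasure μ] {h : Ω → ℝ}
    (hh : Measurable h) :
    Tendsto (fun l => μ {x | l < h x}) atTop (𝓝 0) := by
  have hempty : ⋂ l : ℝ, {x | l < h x} = ∅ :=
    eq_empty_of_forall_notMem fun x hx => lt_irrefl (h x) (mem_iInter.1 hx (h x))
  rw [← measure_empty (μ := μ), ← hempty]
  exact tendsto_measure_iInter_atTop
    (fun l => (measurableSet_lt measurable_const hh).nullMeasurableSet)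
    (fun l l' hll' x hx => lt_of_le_of_lt hll' hx) ⟨0, measure_ne_top μ _⟩

variable [Fintype ι] {h : ι → Ω → ℝ}

/-- The distribution function of the disjoint sum `⊕ i, h i`. -/
noncomputable def sumDistrib (μ : Measure Ω) (h : ι → Ω → ℝ) (l : ℝ) : ℝ≥0∞ :=
  ∑ i, μ {x | l < h i x}

lemma antitone_sumDistrib : Antitone (sumDistrib μ h) := fun _ _ hll' =>
  Finset.sum_le_sum fun _ _ => measure_mono fun _ hx => lt_of_le_of_lt hll' hx

lemma continuousWithinAt_sumDistrib (a : ℝ) : ContinuousWithinAt (sumDistrib μ h) (Ioi a) a :=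
  tendsto_finsetSum _ fun i _ => tendsto_measure_setOf_lt_nhdsGT μ (h i) a

lemma tendsto_sumDistrib_atTop [IsFiniteMeasure μ] (hh : ∀ i, Measurable (h i)) :
    Tendsto (sumDistrib μ h) atTop (𝓝 0) := by
  have := tendsto_finsetSum Finset.univ fun i _ => tendsto_measure_setOf_lt_atTop μ (hh i)
  rwa [Finset.sum_const_zero] at this

lemma exists_sumDistrib_le [IsFiniteMeasure μ] (hh : ∀ i, Measurable (h i)) {s : ℝ}
    (hs : 0 < s) : ∃ l, 0 ≤ l ∧ sumDistrib μ h l ≤ ENNReal.ofReal s :=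
  ((eventually_ge_atTop 0).and
    ((tendsto_sumDistrib_atTop hh).eventually (Iic_mem_nhds (ENNReal.ofReal_pos.2 hs)))).exists

lemma sumDistrib_rearr_le [IsFiniteMeasure μ] (hh : ∀ i, Measurable (h i)) {s : ℝ}
    (hs : 0 < s) : sumDistrib μ h (rearr (sumDistrib μ h) s) ≤ ENNReal.ofReal s :=
  apply_rearr_le antitone_sumDistrib continuousWithinAt_sumDistrib (exists_sumDistrib_le hh hs)

lemma sumDistrib_eq_of_truncate {g : ι → Ω → ℝ} {m l : ℝ}
    (hg : ∀ i x, g i x = if m < h i x then h i x else 0) (hl : 0 ≤ l) :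
    sumDistrib μ g l = sumDistrib μ h (max l m) := by
  refine Finset.sum_congr rfl fun i _ => congrArg μ (Set.ext fun x => ?_)
  by_cases hx : m < h i x <;> simp [hg, hx, hl.not_gt]

end Distribution

lemma setOf_lt_iSup {Ω ι : Type*} [Finite ι] [Nonempty ι] (h : ι → Ω → ℝ) (l : ℝ) :
    {x | l < ⨆ i, h i x} = ⋃ i, h i ⁻¹' Ioi l := by
  ext x
  simp [lt_ciSup_iff (Set.finite_range _).bddAbove]

section Truncation

variable {Ω ι : Type*} [MeasurableSpace Ω] [Fintype ι] {μ : Measure Ω} {f g : ι → Ω → ℝ}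

lemma sumDistrib_truncate_le_one [IsFiniteMeasure μ] (hf : ∀ i, Measurable (f i))
    (hg : ∀ i x, g i x = if rearr (sumDistrib μ f) 1 < f i x then f i x else 0) {l : ℝ}
    (hl : 0 ≤ l) : sumDistrib μ g l ≤ 1 := by
  rw [sumDistrib_eq_of_truncate hg hl]
  have hDFm : sumDistrib μ f (rearr (sumDistrib μ f) 1) ≤ 1 := by
    simpa using sumDistrib_rearr_le hf one_pos
  exact (antitone_sumDistrib (le_max_right _ _)).trans hDFm

lemma rearr_truncate_eq_zero [IsFiniteMeasure μ] (hf : ∀ i, Measurable (f i))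
    (hg : ∀ i x, g i x = if rearr (sumDistrib μ f) 1 < f i x then f i x else 0) {t : ℝ}
    (ht : 1 ≤ t) : rearr (sumDistrib μ g) t = 0 :=
  rearr_eq_zero <| calc
    sumDistrib μ g 0 ≤ 1 := sumDistrib_truncate_le_one hf hg le_rfl
    _ ≤ ENNReal.ofReal t := by simpa using ht

lemma rearr_truncate_eq {m t : ℝ} (hg : ∀ i x, g i x = if m < f i x then f i x else 0)
    (hstrict : 0 < m → m < rearr (sumDistrib μ f) t) :
    rearr (sumDistrib μ g) t = rearr (sumDistrib μ f) t := by
  refine rearr_congr fun l hl => ⟨fun hDGl => ?_, fun hDFl => ?_⟩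
  · rcases le_or_gt m l with hml | hlm
    · rwa [sumDistrib_eq_of_truncate hg hl, max_eq_left hml] at hDGl
    · rw [sumDistrib_eq_of_truncate hg hl, max_eq_right hlm.le] at hDGl
      exact absurd (rearr_le (hl.trans hlm.le) hDGl) (hstrict (hl.trans_lt hlm)).not_ge
  · rw [sumDistrib_eq_of_truncate hg hl]
    exact (antitone_sumDistrib (le_max_left l m)).trans hDFl

lemma rearr_truncate_two_mul_le [IsProbabilityMeasure μ] [Nonempty ι]
    (hf : ∀ i, Measurable (f i)) (hindep : iIndepFun f μ)
    (hg : ∀ i x, g i x = if rearr (sumDistrib μ f) 1 < f i x then f i x else 0) {t : ℝ}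
    (ht : 0 < t) :
    rearr (sumDistrib μ g) (2 * t) ≤ rearr (fun l => μ {x | l < ⨆ i, g i x}) t := by
  set m := rearr (sumDistrib μ f) 1
  have hg' : g = fun i x => if m < f i x then f i x else 0 := funext fun i => funext (hg i)
  have htrunc : Measurable fun x : ℝ => if m < x then x else 0 :=
    Measurable.ite (measurableSet_lt measurable_const measurable_id) measurable_id measurable_const
  have hgmeas : ∀ i, Measurable (g i) := fun i => hg' ▸ htrunc.comp (hf i)
  have hgindep : iIndepFun g μ := hg' ▸ hindep.comp _ fun _ => htrunc
  obtain ⟨l₀, hl₀, hDGl₀⟩ := exists_sumDistrib_le (μ := μ) hgmeas ht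
  refine rearr_le_rearr ⟨l₀, hl₀, ?_⟩ fun l hl hmax => ?_
  · rw [setOf_lt_iSup]
    exact (measure_iUnion_fintype_le μ _).trans hDGl₀
  · rw [setOf_lt_iSup] at hmax
    calc sumDistrib μ g l ≤ 2 * μ (⋃ i, g i ⁻¹' Ioi l) :=
          hgindep.sum_measure_preimage_le_two_mul hgmeas (fun _ => measurableSet_Ioi)
            (sumDistrib_truncate_le_one hf hg hl)
      _ ≤ ENNReal.ofReal (2 * t) := by
        rw [ENNReal.ofReal_mul zero_le_two, ENNReal.ofReal_ofNat]
        gcongr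

end Truncation

theorem stmt_11_general (n : ℕ) (hn : 0 < n) (f : Fin n → ℝ → ℝ)
    (hmeas : ∀ k, Measurable (f k))
    (hindep : iIndepFun (m := fun _ => Real.measurableSpace) f P)
    (muF : ℝ → ℝ) (hmuF : muF = rearr (fun l => ∑ k, P {t | l < f k t}))
    (hstrict : ∀ s₁ s₂ : ℝ, 0 < s₁ → s₁ < s₂ → 0 < muF s₂ → muF s₂ < muF s₁)
    (g : Fin n → ℝ → ℝ)
    (hg : ∀ k t, g k t = if muF 1 < f k t then f k t else 0)
    (muG : ℝ → ℝ) (hmuG : muG = rearr (fun l => ∑ k, P {t | l < g k t})) :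
    (∀ t : ℝ, 0 < t →
      muG (2 * t) ≤ rearr (fun l => P {x | l < ⨆ k, g k x}) t) ∧
    (∀ t : ℝ, 0 < t → t < 1 → muG t = muF t) ∧
    (∀ t : ℝ, 1 ≤ t → muG t = 0) := by
  have : Nonempty (Fin n) := ⟨⟨0, hn⟩⟩
  change muF = rearr (sumDistrib P f) at hmuF
  change muG = rearr (sumDistrib P g) at hmuG
  subst hmuF hmuG
  exact ⟨fun t ht => rearr_truncate_two_mul_le hmeas hindep hg ht,
    fun t ht ht1 => rearr_truncate_eq hg (hstrict t 1 ht ht1),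
    fun t ht => rearr_truncate_eq_zero hmeas hg ht⟩

/-- for independent nonnegative `f_0,…,f_{n-1}` on `(0,1)` with
disjoint sum `f` (distribution `λ ↦ ∑_k m{f_k > λ}`, rearrangement `μ(·,f)`
without intervals of constancy), setting `g_k = f_k · 1_{f_k > μ(1,f)}` with
disjoint sum `g`, one has `μ(t, max_k g_k) ≥ μ(2t, g)` for all `t > 0`, and
`μ(g) = μ(f) χ_{(0,1)}`. -/
theorem stmt_11 (n : ℕ) (hn : 0 < n) (f : Fin n → ℝ → ℝ)
    (hmeas : ∀ k, Measurable (f k)) (hpos : ∀ k t, 0 ≤ f k t)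
    (hindep : iIndepFun (m := fun _ => Real.measurableSpace) f P)
    (muF : ℝ → ℝ) (hmuF : muF = rearr (fun l => ∑ k, P {t | l < f k t}))
    (hstrict : ∀ s₁ s₂ : ℝ, 0 < s₁ → s₁ < s₂ → 0 < muF s₂ → muF s₂ < muF s₁)
    (g : Fin n → ℝ → ℝ)
    (hg : ∀ k t, g k t = if muF 1 < f k t then f k t else 0)
    (muG : ℝ → ℝ) (hmuG : muG = rearr (fun l => ∑ k, P {t | l < g k t})) :
    (∀ t : ℝ, 0 < t →
      muG (2 * t) ≤ rearr (fun l => P {x | l < ⨆ k, g k x}) t) ∧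
    (∀ t : ℝ, 0 < t → t < 1 → muG t = muF t) ∧
    (∀ t : ℝ, 1 ≤ t → muG t = 0) :=
  stmt_11_general n hn f hmeas hindep muF hmuF hstrict g hg muG hmuG
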